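/- Let (f_n) be the Fibonacci sequence with f_0 = f_1 = 1. In a tree of the heptagrid generated by the rules G → YBG, B → BO, Y → YBG, O → YBO (where Y, G, O nodes have three sons and B nodes have two sons), the number of nodes at level m equals f_{2m+1}. -/
import Mathlib


/-- Fibonacci sequence with f 0 = f 1 = 1. -/
def f (n : ℕ) : ℕ := Nat.fib (n + 1)

/-- Statuses of tiles in a tree of the heptagrid. -/
inductive Status | Y | G | B | O
deriving DecidableEq

open Status in
/-- Number of nodes at level m of the tree rooted at a node of status s,
generated by the rules G → YBG, B → BO, Y → YBG, O → YBO. -/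
def levelCount : Status → ℕ → ℕ
  | _, 0 => 1
  | Y, m + 1 => levelCount Y m + levelCount B m + levelCount G m
  | G, m + 1 => levelCount Y m + levelCount B m + levelCount G m
  | O, m + 1 => levelCount Y m + levelCount B m + levelCount O m
  | B, m + 1 => levelCount B m + levelCount O m


open Status in
lemma levelCount_all (m : ℕ) :
    levelCount Y m = f (2 * m + 1) ∧ levelCount G m = f (2 * m + 1) ∧
    levelCount O m = f (2 * m + 1) ∧ levelCount B m = f (2 * m) := by
  induction m with
  | zero => simp [levelCount, f]
  | succ n ih =>
    obtain ⟨hY, hG, hO, hB⟩ := ih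
    have h2 : 2 * (n + 1) = 2 * n + 1 + 1 := by ring
    have h3 : 2 * (n + 1) + 1 = 2 * n + 1 + 1 + 1 := by ring
    refine ⟨?_, ?_, ?_, ?_⟩ <;>
      simp only [levelCount, hY, hG, hO, hB, f, h2, h3, Nat.fib_add_two] <;> ring

theorem levelCount_eq_fib (s : Status) (hs : s ≠ Status.B) (m : ℕ) :
    levelCount s m = f (2 * m + 1) := by
  obtain ⟨hY, hG, hO, hB⟩ := levelCount_all m
  cases s with
  | Y => exact hY
  | G => exact hG
  | O => exact hO
  | B => exact absurd rfl hs
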